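/- arXiv:0809.0824 — 2 statements merged into one kernel-verified Lean document; each statement's English description precedes it below -/
import Mathlib

section
/- Let V be a finite-dimensional real vector space and let A be an associative subalgebra of End(V) such that every element of A has trace zero. Then every element of A is a nilpotent endomorphism. -/
/-!
Write the minimal polynomial of `φ` as `X ^ m * g` with `X ∤ g`. A Bézout relation
`a * X ^ (m + 1) + b * g = 1` splits `1 = e + f` into the orthogonal idempotents
`e = (a * X ^ (m + 1))(φ)` and `f = (b * g)(φ)`. As `e` is a polynomial in `φ` without constant
term, it lies in `A`, so its trace, which is its rank, vanishes; hence `e = 0`, `f = 1`, and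
`φ ^ m = φ ^ m * f = (b * minpoly)(φ) = 0`.
-/

open Polynomial

theorem NonUnitalSubalgebra.aeval_X_mul_mem {R B : Type*} [CommSemiring R] [Semiring B]
    [Algebra R B] (S : NonUnitalSubalgebra R B) {x : B} (hx : x ∈ S) (q : R[X]) :
    aeval x (X * q) ∈ S := by
  induction q using Polynomial.induction_on with
  | C a => simpa [Algebra.commutes, Algebra.smul_def] using SMulMemClass.smul_mem a hx
  | add p q hp hq => simpa [mul_add] using add_mem hp hq
  | monomial n a ih =>
    rw [show X * (C a * X ^ (n + 1)) = X * (C a * X ^ n) * X by ring, map_mul, aeval_X]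
    exact mul_mem ih hx

theorem exists_isIdempotentElem_aeval_X_mul {K B : Type*} [Field K] [Ring B] [Algebra K B]
    {x : B} {p : K[X]} (hp : p ≠ 0) (hpx : aeval x p = 0) :
    ∃ q : K[X], IsIdempotentElem (aeval x (X * q)) ∧
      (aeval x (X * q) = 0 → IsNilpotent x) := by
  obtain ⟨g, hpg, hXg⟩ := p.exists_eq_pow_rootMultiplicity_mul_and_not_dvd hp 0
  set m := p.rootMultiplicity 0
  simp only [map_zero, sub_zero] at hpg hXg
  obtain ⟨a, b, hab⟩ := ((irreducible_X.coprime_iff_not_dvd).mpr hXg).pow_left (m := m + 1)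
  set e := aeval x (X * (a * X ^ m))
  set f := aeval x (b * g)
  have hsum : e + f = 1 := by
    rw [← map_add, ← map_one (aeval (R := K) x), ← hab]; ring_nf
  have hprod : e * f = 0 := by
    rw [← map_mul, show X * (a * X ^ m) * (b * g) = a * b * X * p by rw [hpg]; ring, map_mul, hpx,
      mul_zero]
  refine ⟨a * X ^ m, ?_, fun he => ⟨m, ?_⟩⟩
  · calc e * e = e * (e + f) := by rw [mul_add, hprod, add_zero]
      _ = e := by rw [hsum, mul_one]
  · rw [show e = 0 from he, zero_add] at hsum
    rw [← mul_one (x ^ m), ← hsum, ← aeval_X_pow (R := K), ← map_mul,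
      show X ^ m * (b * g) = b * p by rw [hpg]; ring, map_mul, hpx, mul_zero]

theorem NonUnitalSubalgebra.isNilpotent_of_forall_trace_eq_zero {K V : Type*} [Field K]
    [CharZero K] [AddCommGroup V] [Module K V] [FiniteDimensional K V]
    (A : NonUnitalSubalgebra K (Module.End K V)) (htr : ∀ φ ∈ A, LinearMap.trace K V φ = 0)
    {φ : Module.End K V} (hφ : φ ∈ A) : IsNilpotent φ := by
  obtain ⟨q, hidem, hnil⟩ := exists_isIdempotentElem_aeval_X_mul
    (minpoly.ne_zero (Algebra.IsIntegral.isIntegral φ)) (minpoly.aeval K φ)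
  exact hnil <|
    LinearMap.IsIdempotentElem.eq_zero_of_trace_eq_zero hidem (htr _ (A.aeval_X_mul_mem hφ q))

/-- Every element of an associative subalgebra of trace-zero endomorphisms of a
finite-dimensional real vector space is nilpotent. -/
theorem stmt_0 (V : Type*) [AddCommGroup V] [Module ℝ V] [FiniteDimensional ℝ V]
    (A : NonUnitalSubalgebra ℝ (Module.End ℝ V))
    (htr : ∀ φ ∈ A, LinearMap.trace ℝ V φ = 0) :
    ∀ φ ∈ A, IsNilpotent φ :=
  fun _ hφ => A.isNilpotent_of_forall_trace_eq_zero htr hφ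
end

section
/- Let (V, ·) be a right-symmetric algebra, i.e. a bilinear product satisfying z·(y·x) − (z·y)·x = z·(x·y) − (z·x)·y for all x,y,z. Then the associative kernel K = { x ∈ V : x·(y·z) = (x·y)·z for all y,z ∈ V } is closed under the product: if x, x' ∈ K then x·x' ∈ K. -/
def leftNucleus {V : Type*} (m : V → V → V) : Set V :=
  {x | ∀ y z, m x (m y z) = m (m x y) z}

theorem op_mem_leftNucleus {V : Type*} {m : V → V → V} {x x' : V}
    (hx : x ∈ leftNucleus m) (hx' : x' ∈ leftNucleus m) : m x x' ∈ leftNucleus m := by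
  intro y z
  calc m (m x x') (m y z) = m x (m x' (m y z)) := (hx _ _).symm
    _ = m x (m (m x' y) z) := by rw [hx']
    _ = m (m x (m x' y)) z := hx _ _
    _ = m (m (m x x') y) z := by rw [hx]

theorem stmt_5_general (k V : Type*) [Field k] [AddCommGroup V] [Module k V]
    (m : V →ₗ[k] V →ₗ[k] V)
    (x x' : V)
    (hx : ∀ y z : V, m x (m y z) = m (m x y) z)
    (hx' : ∀ y z : V, m x' (m y z) = m (m x' y) z) :
    ∀ y z : V, m (m x x') (m y z) = m (m (m x x') y) z :=
  op_mem_leftNucleus (m := fun a b => m a b) hx hx'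

/-- The associative kernel of a right-symmetric algebra is closed under the product. -/
theorem stmt_5 (k V : Type*) [Field k] [AddCommGroup V] [Module k V]
    (m : V →ₗ[k] V →ₗ[k] V)
    (hrs : ∀ x y z : V, m z (m y x) - m (m z y) x = m z (m x y) - m (m z x) y)
    (x x' : V)
    (hx : ∀ y z : V, m x (m y z) = m (m x y) z)
    (hx' : ∀ y z : V, m x' (m y z) = m (m x' y) z) :
    ∀ y z : V, m (m x x') (m y z) = m (m (m x x') y) z :=
  stmt_5_general k V m x x' hx hx'
end
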